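/- Let v = [q; w_1,...,w_n] be a WVG, and let v' = v_{&{i,j}} be the game obtained when player i annexes (merges with) player j, forming a single player of weight w_i + w_j on the player set (N\{i,j}) ∪ {&{i,j}} with the same quota. Then η_{&{i,j}}(v') = (η_i(v) + η_j(v))/2 and for every other player x, η_x(v') ≤ η_x(v); consequently β_{&{i,j}}(v') ≥ (β_i(v) + β_j(v))/2. -/

import Mathlib

open scoped Classical

section WVG

variable {α : Type*} [Fintype α] [DecidableEq α]

/-- A coalition `S` is winning in the WVG with quota `q` and weights `w`
iff its total weight is at least the quota. -/
def winning (q : ℕ) (w : α → ℕ) (S : Finset α) : Prop :=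
  q ≤ ∑ j ∈ S, w j

/-- `eta q w i` is the number of coalitions containing `i` that are winning
and become losing when `i` is removed (the raw Banzhaf count of `i`). -/
noncomputable def eta (q : ℕ) (w : α → ℕ) (i : α) : ℕ :=
  (Finset.univ.filter fun S : Finset α =>
    i ∈ S ∧ winning q w S ∧ ¬ winning q w (S.erase i)).card

/-- Total raw Banzhaf count over all players. -/
noncomputable def totalEta (q : ℕ) (w : α → ℕ) : ℕ :=
  ∑ i, eta q w i

/-- Banzhaf index of player `i`. -/
noncomputable def banzhaf (q : ℕ) (w : α → ℕ) (i : α) : ℚ :=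
  (eta q w i : ℚ) / (totalEta q w : ℚ)

/-- Shapley-Shubik index of player `i`. -/
noncomputable def shapley (q : ℕ) (w : α → ℕ) (i : α) : ℚ :=
  ∑ S ∈ (Finset.univ.filter fun S : Finset α =>
      i ∈ S ∧ winning q w S ∧ ¬ winning q w (S.erase i)),
    ((S.card - 1).factorial * (Fintype.card α - S.card).factorial : ℚ) /
      ((Fintype.card α).factorial : ℚ)

end WVG

/-!
A player of weight `a` swings exactly the coalitions `T` of the others with
`w(T) < q ≤ w(T) + a`. Splitting such `T` according to which of `i`, `j` it contains, every count
involved becomes a count of swings over subsets of `N \ {i, j}` shifted by the weight of the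
members of `{i, j}` present. Since `(t, t + a + b]` is the disjoint union of `(t, t + a]` and
`(t + a, t + a + b]`, the merged player's swings are counted once by each of `η_i` and `η_j`.
For another player the merged game keeps only the shifts `0` and `w_i + w_j` of the four shifts
`0, w_i, w_j, w_i + w_j`, so its count can only drop. Hence the total count does not increase,
which gives the bound on the Banzhaf index.
-/

open Finset

section SwingCount

variable {β γ : Type*} (q : ℕ) (w : β → ℕ)

/-- The number of coalitions `T ⊆ s` which, together with players of total weight `c`, lose,
but win once a player of weight `a` joins them. -/
noncomputable def swingCount (s : Finset β) (c a : ℕ) : ℕ :=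
  #{T ∈ s.powerset | c + ∑ x ∈ T, w x < q ∧ q ≤ c + ∑ x ∈ T, w x + a}

theorem swingCount_add (s : Finset β) (c a b : ℕ) :
    swingCount q w s c (a + b) = swingCount q w s c a + swingCount q w s (c + a) b := by
  simp only [swingCount, card_filter, ← sum_add_distrib]
  refine sum_congr rfl fun T _ => ?_
  split_ifs <;> omega

theorem swingCount_of_mem [DecidableEq β] {s : Finset β} {y : β} (hy : y ∈ s) (c a : ℕ) :
    swingCount q w s c a =
      swingCount q w (s.erase y) c a + swingCount q w (s.erase y) (c + w y) a := by
  conv_lhs => rw [← insert_erase hy]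
  simp only [swingCount, card_filter, sum_powerset_insert (notMem_erase y s)]
  congr 1
  refine sum_congr rfl fun T hT => ?_
  have hyT : y ∉ T := fun h => notMem_erase y s (mem_powerset.1 hT h)
  simp only [sum_insert hyT, ← add_assoc]

theorem swingCount_map (w' : γ → ℕ) (e : β ↪ γ) {s : Finset β}
    (hw : ∀ x ∈ s, w' (e x) = w x) (c a : ℕ) :
    swingCount q w' (s.map e) c a = swingCount q w s c a := by
  have hsum : ∀ T ∈ s.powerset, ∑ x ∈ T.map e, w' x = ∑ x ∈ T, w x := fun T hT => by
    rw [sum_map]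
    exact sum_congr rfl fun x hx => hw x (mem_powerset.1 hT hx)
  symm
  refine card_bij (fun T _ => T.map e) (fun T hT => ?_) (fun _ _ _ _ h => map_injective e h)
    (fun T hT => ?_)
  · simp only [mem_filter, mem_powerset] at hT ⊢
    rw [hsum T (mem_powerset.2 hT.1)]
    exact ⟨map_subset_map.2 hT.1, hT.2⟩
  · simp only [mem_filter, mem_powerset] at hT
    obtain ⟨U, hU, rfl⟩ := subset_map_iff.1 hT.1
    refine ⟨U, ?_, rfl⟩
    simp only [mem_filter, mem_powerset]
    rw [← hsum U (mem_powerset.2 hU)]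
    exact ⟨hU, hT.2⟩

end SwingCount

theorem eta_eq_swingCount {α : Type*} [Fintype α] [DecidableEq α] (q : ℕ) (w : α → ℕ) (i : α) :
    eta q w i = swingCount q w (univ.erase i) 0 (w i) := by
  have hi : ∀ {T : Finset α}, T ⊆ univ.erase i → i ∉ T := fun hT h => notMem_erase i univ (hT h)
  refine card_nbij' (·.erase i) (insert i) ?_ ?_ ?_ ?_
  · intro S hS
    obtain ⟨-, hiS, hwin, hlose⟩ := mem_filter.1 hS
    unfold winning at hwin hlose
    rw [← add_sum_erase S w hiS] at hwin
    simp only [mem_coe, mem_filter, mem_powerset]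
    exact ⟨erase_subset_erase i (subset_univ S), by omega, by omega⟩
  · intro T hT
    simp only [mem_coe, mem_filter, mem_powerset] at hT
    rw [mem_coe, mem_filter]
    refine ⟨mem_univ _, mem_insert_self i T, ?_, ?_⟩ <;>
      simp only [winning, erase_insert (hi hT.1), sum_insert (hi hT.1)] <;> omega
  · intro S hS
    exact insert_erase (mem_filter.1 hS).2.1
  · intro T hT
    exact erase_insert (hi (mem_powerset.1 (mem_filter.1 hT).1))

section Merge

variable {α : Type*} {q : ℕ} {w : α → ℕ} {i j : α} {w' : {x : α // x ≠ j} → ℕ}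

theorem eta_eq_swingCount_erase [Fintype α] [DecidableEq α] (hij : i ≠ j) :
    eta q w i = swingCount q w ((univ.erase i).erase j) 0 (w i) +
      swingCount q w ((univ.erase i).erase j) (w j) (w i) := by
  rw [eta_eq_swingCount, swingCount_of_mem q w (mem_erase.2 ⟨hij.symm, mem_univ j⟩), zero_add]

theorem map_univ_subtype_ne [Fintype α] [DecidableEq α] (j : α) :
    (univ : Finset {x : α // x ≠ j}).map (Function.Embedding.subtype _) = univ.erase j := by
  rw [univ_map_subtype, filter_ne']

theorem swingCount_merge (hij : i ≠ j) (hw : ∀ y : {x : α // x ≠ j}, y.1 ≠ i → w' y = w y.1)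
    {s : Finset {x : α // x ≠ j}} (hs : ⟨i, hij⟩ ∉ s) (c a : ℕ) :
    swingCount q w' s c a = swingCount q w (s.map (Function.Embedding.subtype _)) c a := by
  refine (swingCount_map q w' w _ (fun y hy => (hw y fun h => ?_).symm) c a).symm
  obtain rfl : y = ⟨i, hij⟩ := Subtype.ext h
  exact hs hy

variable [Fintype α] [DecidableEq α]

theorem two_mul_eta_merge (hij : i ≠ j) (hwk : w' ⟨i, hij⟩ = w i + w j)
    (hw : ∀ y : {x : α // x ≠ j}, y.1 ≠ i → w' y = w y.1) :
    2 * eta q w' ⟨i, hij⟩ = eta q w i + eta q w j := by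
  have hmerged : eta q w' ⟨i, hij⟩ = swingCount q w ((univ.erase i).erase j) 0 (w i + w j) := by
    rw [eta_eq_swingCount, hwk, swingCount_merge hij hw (notMem_erase _ _), map_erase,
      map_univ_subtype_ne, Function.Embedding.coe_subtype, erase_right_comm]
  rw [hmerged, eta_eq_swingCount_erase hij, eta_eq_swingCount_erase hij.symm, erase_right_comm,
    two_mul]
  nth_rewrite 2 [add_comm (w i)]
  rw [swingCount_add, swingCount_add, zero_add, zero_add]
  ring

theorem eta_merge_le (hij : i ≠ j) (hwk : w' ⟨i, hij⟩ = w i + w j)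
    (hw : ∀ y : {x : α // x ≠ j}, y.1 ≠ i → w' y = w y.1) {x : α} (hxj : x ≠ j) (hxi : x ≠ i) :
    eta q w' ⟨x, hxj⟩ ≤ eta q w x := by
  set R := ((univ.erase x).erase i).erase j
  have hk : (⟨i, hij⟩ : {x : α // x ≠ j}) ∈ univ.erase ⟨x, hxj⟩ :=
    mem_erase.2 ⟨fun h => hxi (congrArg Subtype.val h).symm, mem_univ _⟩
  have hmerged :
      eta q w' ⟨x, hxj⟩ = swingCount q w R 0 (w x) + swingCount q w R (w i + w j) (w x) := by
    rw [eta_eq_swingCount, swingCount_of_mem q w' hk, zero_add, hwk, hw _ hxi,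
      swingCount_merge hij hw (notMem_erase _ _), swingCount_merge hij hw (notMem_erase _ _),
      map_erase, map_erase, map_univ_subtype_ne, Function.Embedding.coe_subtype]
    dsimp only
    rw [erase_right_comm (a := j) (b := x), erase_right_comm (a := j) (b := i)]
  have horig : eta q w x = swingCount q w R 0 (w x) + swingCount q w R (w j) (w x) +
      (swingCount q w R (w i) (w x) + swingCount q w R (w i + w j) (w x)) := by
    rw [eta_eq_swingCount, swingCount_of_mem q w (mem_erase.2 ⟨hxi.symm, mem_univ i⟩),
      swingCount_of_mem q w (mem_erase.2 ⟨hij.symm, mem_erase.2 ⟨hxj.symm, mem_univ j⟩⟩),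
      swingCount_of_mem q w (mem_erase.2 ⟨hij.symm, mem_erase.2 ⟨hxj.symm, mem_univ j⟩⟩),
      zero_add, zero_add]
  omega

theorem totalEta_merge_le (hij : i ≠ j) (hwk : w' ⟨i, hij⟩ = w i + w j)
    (hw : ∀ y : {x : α // x ≠ j}, y.1 ≠ i → w' y = w y.1) :
    totalEta q w' ≤ totalEta q w := by
  have hbound (y : {x : α // x ≠ j}) :
      eta q w' y ≤ eta q w y.1 + if y.1 = i then eta q w j else 0 := by
    obtain ⟨x, hxj⟩ := y
    by_cases hxi : x = i
    · subst hxi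
      have := two_mul_eta_merge (q := q) hij hwk hw
      simp only [if_true]
      omega
    · simpa only [hxi, if_false, add_zero] using eta_merge_le hij hwk hw hxj hxi
  calc totalEta q w'
      ≤ ∑ y : {x : α // x ≠ j}, (eta q w y.1 + if y.1 = i then eta q w j else 0) :=
        sum_le_sum fun y _ => hbound y
    _ = ∑ x ∈ univ.erase j, (eta q w x + if x = i then eta q w j else 0) :=
        (sum_subtype _ (fun _ => by simp)
          fun x => eta q w x + if x = i then eta q w j else 0).symm
    _ = ∑ x ∈ univ.erase j, eta q w x + eta q w j := by
        rw [sum_add_distrib, sum_ite_eq', if_pos (mem_erase.2 ⟨hij, mem_univ i⟩)]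
    _ = totalEta q w := sum_erase_add _ _ (mem_univ j)

end Merge

theorem merge_banzhaf_bounds_general
    (α : Type*) [Fintype α] [DecidableEq α]
    (q : ℕ) (w : α → ℕ) (i j : α) (hij : i ≠ j)
    (w' : {x : α // x ≠ j} → ℕ)
    (hw' : w' = fun x : {x : α // x ≠ j} => if x.1 = i then w i + w j else w x.1)
    (h2 : 0 < totalEta q w') :
    ((eta q w' ⟨i, hij⟩ : ℚ) = ((eta q w i : ℚ) + (eta q w j : ℚ)) / 2) ∧
    (∀ (x : α) (hx : x ≠ j), x ≠ i → eta q w' ⟨x, hx⟩ ≤ eta q w x) ∧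
    ((banzhaf q w i + banzhaf q w j) / 2 ≤ banzhaf q w' ⟨i, hij⟩) := by
  have hwk : w' ⟨i, hij⟩ = w i + w j := by simp [hw']
  have hw (y : {x : α // x ≠ j}) (hy : y.1 ≠ i) : w' y = w y.1 := by simp [hw', hy]
  have hmerged : 2 * (eta q w' ⟨i, hij⟩ : ℚ) = eta q w i + eta q w j := by
    exact_mod_cast two_mul_eta_merge hij hwk hw
  have htotal : (totalEta q w' : ℚ) ≤ totalEta q w := by
    exact_mod_cast totalEta_merge_le hij hwk hw
  refine ⟨by linarith, fun x hxj hxi => eta_merge_le hij hwk hw hxj hxi, ?_⟩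
  calc (banzhaf q w i + banzhaf q w j) / 2 = eta q w' ⟨i, hij⟩ / (totalEta q w : ℚ) := by
        rw [banzhaf, banzhaf, ← add_div, ← hmerged]
        ring
    _ ≤ banzhaf q w' ⟨i, hij⟩ :=
        div_le_div_of_nonneg_left (Nat.cast_nonneg _) (by exact_mod_cast h2) htotal

/-- If player `i` annexes (merges with) player `j`, the merged player's raw
Banzhaf count is `(η_i + η_j)/2`, every other player's raw count does not
increase, and consequently the merged player's Banzhaf index is at least
`(β_i + β_j)/2`. -/
theorem merge_banzhaf_bounds
    (α : Type*) [Fintype α] [DecidableEq α]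
    (q : ℕ) (w : α → ℕ) (i j : α) (hij : i ≠ j)
    (w' : {x : α // x ≠ j} → ℕ)
    (hw' : w' = fun x : {x : α // x ≠ j} => if x.1 = i then w i + w j else w x.1)
    (h1 : 0 < totalEta q w) (h2 : 0 < totalEta q w') :
    ((eta q w' ⟨i, hij⟩ : ℚ) = ((eta q w i : ℚ) + (eta q w j : ℚ)) / 2) ∧
    (∀ (x : α) (hx : x ≠ j), x ≠ i → eta q w' ⟨x, hx⟩ ≤ eta q w x) ∧
    ((banzhaf q w i + banzhaf q w j) / 2 ≤ banzhaf q w' ⟨i, hij⟩) :=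
  merge_banzhaf_bounds_general α q w i j hij w' hw' h2
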